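/- Under the hypotheses of the infinite-population regret theorem (η_1 > η_2 ≥ … ≥ η_m, δ = ln(β/(1-β)) ∈ (0,1], 6μ ≤ δ², T ≥ ln m/δ²), the fraction of time assigned to the best option satisfies (1/T)·∑_{t=1}^T E[P_1^{t-1}] ≥ 1 - 3δ/(η_1 - η_2). -/

import Mathlib

/-!
Write `β^r (1-β)^(1-r) = (1-β) e^{δr}`. Since `exp` is convex, a round with rewards in `[0, 1]`
multiplies the total weight by at most `(1-β) exp ((e^δ - 1)(g_t + μ))`, where `g_t` is the reward
collected by the normalized weights `P^t`, while a single option keeps at least the factor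
`(1-β)(1-μ) e^{δr}`. Comparing logarithms, with `e^δ - 1 ≤ δ + δ²`, `-ln (1-μ) ≤ 2μ` and `6μ ≤ δ²`,
the regret against every option is at most `ln m / δ + 2δT` on every path. The rewards of round
`t + 1` are independent of the history that determines `P^t`, so in expectation `g_t` becomes
`∑_j η_j E[P_j^t] ≤ η_1 E[P_1^t] + η_2 (1 - E[P_1^t])`. Hence
`(η_1 - η_2)(T - ∑_t E[P_1^t]) ≤ ln m / δ + 2δT ≤ 3δT`, the last step being `T ≥ ln m / δ²`.
-/

open MeasureTheory Finset ProbabilityTheory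

section Numerics

open Real

lemma exp_mul_le_one_add_mul {δ x : ℝ} (hx₀ : 0 ≤ x) (hx₁ : x ≤ 1) :
    exp (δ * x) ≤ 1 + (exp δ - 1) * x := by
  have h := convexOn_exp.2 (Set.mem_univ 0) (Set.mem_univ δ) (sub_nonneg.2 hx₁) hx₀ (by ring)
  simp only [smul_eq_mul, mul_zero, zero_add, exp_zero, mul_one, mul_comm x δ] at h
  linarith

lemma exp_sub_one_le_add_sq {δ : ℝ} (hδ : |δ| ≤ 1) : exp δ - 1 ≤ δ + δ ^ 2 := by
  linarith [(abs_le.1 (abs_exp_sub_one_sub_id_le hδ)).2]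

lemma neg_two_mul_le_log_one_sub {μ : ℝ} (hμ₀ : 0 ≤ μ) (hμ : μ ≤ 1 / 2) :
    -(2 * μ) ≤ log (1 - μ) := by
  have h1μ : 0 < 1 - μ := by linarith
  have h := one_sub_inv_le_log_of_pos h1μ
  have hinv : (1 - μ)⁻¹ ≤ 1 + 2 * μ := by rw [inv_le_iff_one_le_mul₀ h1μ]; nlinarith
  linarith

lemma rpow_mul_rpow_one_sub {β : ℝ} (hβ₀ : 0 < β) (hβ₁ : β < 1) (x : ℝ) :
    β ^ x * (1 - β) ^ (1 - x) = (1 - β) * exp (log (β / (1 - β)) * x) := by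
  have h1β : 0 < 1 - β := by linarith
  rw [← rpow_def_of_pos (div_pos hβ₀ h1β), div_rpow hβ₀.le h1β.le, rpow_sub h1β, rpow_one]
  field_simp

lemma lt_one_of_le_div_add_one {a x : ℝ} (ha : 0 < a) (hx : x ≤ a / (a + 1)) : x < 1 :=
  hx.trans_lt ((div_lt_one (by positivity)).2 (by linarith))

lemma log_odds_mem_Ioc {β : ℝ} (hβ : 1 / 2 < β) (hβ' : β ≤ exp 1 / (exp 1 + 1)) :
    0 < log (β / (1 - β)) ∧ log (β / (1 - β)) ≤ 1 := by
  have he : 0 < exp 1 := exp_pos 1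
  have hβ₁ : β < 1 := lt_one_of_le_div_add_one he hβ'
  have h1β : 0 < 1 - β := by linarith
  refine ⟨log_pos ((one_lt_div h1β).2 (by linarith)), ?_⟩
  rw [log_le_iff_le_exp (div_pos (by linarith) h1β), div_le_iff₀ h1β]
  rw [le_div_iff₀ (by positivity)] at hβ'
  linarith

end Numerics

lemma sum_Icc_one_sub_one {M : Type*} [AddCommMonoid M] (f : ℕ → M) (T : ℕ) :
    ∑ t ∈ Icc 1 T, f (t - 1) = ∑ t ∈ range T, f t := by
  rw [range_eq_Ico, ← Ico_add_one_right_eq_Icc]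
  simpa using (sum_Ico_add' (fun t => f (t - 1)) 0 T 1).symm

section Mixing

variable {m : ℕ} [NeZero m]

lemma sum_mix_eq (μ : ℝ) (w : Fin m → ℝ) :
    ∑ j, ((1 - μ) * w j + μ / m * ∑ k, w k) = ∑ k, w k := by
  have hm : (m : ℝ) ≠ 0 := NeZero.ne _
  rw [sum_add_distrib, ← mul_sum, sum_const, card_univ, Fintype.card_fin, nsmul_eq_mul]
  field_simp
  ring

lemma sum_mul_mix_le {μ : ℝ} {w x : Fin m → ℝ} (hμ₀ : 0 ≤ μ) (hw : ∀ j, 0 < w j)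
    (hx : ∀ j, 0 ≤ x j ∧ x j ≤ 1) :
    ∑ j, x j * ((1 - μ) * w j + μ / m * ∑ k, w k) ≤
      (∑ j, x j * (w j / ∑ k, w k) + μ) * ∑ k, w k := by
  have hS : 0 < ∑ k, w k := sum_pos (fun k _ => hw k) univ_nonempty
  calc ∑ j, x j * ((1 - μ) * w j + μ / m * ∑ k, w k)
      ≤ ∑ j, (x j * w j + μ / m * ∑ k, w k) := by
        gcongr with j
        have hM : 0 ≤ μ / m * ∑ k, w k := by positivity
        nlinarith [hx j, mul_nonneg (hx j).1 (mul_nonneg hμ₀ (hw j).le),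
          mul_nonneg (sub_nonneg.2 (hx j).2) hM]
    _ = (∑ j, x j * (w j / ∑ k, w k) + μ) * ∑ k, w k := by
        rw [sum_add_distrib, sum_const, card_univ, Fintype.card_fin, nsmul_eq_mul, add_mul,
          sum_mul]
        simp_rw [mul_assoc, div_mul_cancel₀ _ hS.ne']
        field_simp [(NeZero.ne _ : (m : ℝ) ≠ 0)]

end Mixing

section MixedWeights

open Real

variable {m : ℕ} {c δ μ : ℝ} {r : ℕ → Fin m → ℝ}

/-- `r t` is the reward vector of the update from `t` to `t + 1`. -/
noncomputable def mixedWeights (c δ μ : ℝ) (r : ℕ → Fin m → ℝ) : ℕ → Fin m → ℝ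
  | 0 => fun _ => 1
  | t + 1 => fun j => c * exp (δ * r t j) *
      ((1 - μ) * mixedWeights c δ μ r t j + μ / m * ∑ k, mixedWeights c δ μ r t k)

lemma mixedWeights_pos (hc : 0 < c) (hμ₀ : 0 ≤ μ) (hμ₁ : μ < 1) (t : ℕ) (j : Fin m) :
    0 < mixedWeights c δ μ r t j := by
  induction t generalizing j with
  | zero => exact one_pos
  | succ t ih =>
    have hmix : 0 < (1 - μ) * mixedWeights c δ μ r t j +
        μ / m * ∑ k, mixedWeights c δ μ r t k :=
      add_pos_of_pos_of_nonneg (mul_pos (by linarith) (ih j))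
        (mul_nonneg (by positivity) (sum_nonneg fun k _ => (ih k).le))
    exact mul_pos (mul_pos hc (exp_pos _)) hmix

lemma eq_mixedWeights {β : ℝ} (hβ₀ : 0 < β) (hβ₁ : β < 1) {W : ℕ → Fin m → ℝ}
    (hW₀ : ∀ j, W 0 j = 1)
    (hW : ∀ t j, W (t + 1) j = ((1 - μ) * W t j + μ / m * ∑ k, W t k) *
      Real.rpow β (r t j) * Real.rpow (1 - β) (1 - r t j)) :
    W = mixedWeights (1 - β) (Real.log (β / (1 - β))) μ r := by
  funext t j
  induction t generalizing j with
  | zero => exact hW₀ j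
  | succ t ih =>
    simp only [hW, ih, mixedWeights, mul_assoc, Real.rpow_eq_pow,
      rpow_mul_rpow_one_sub hβ₀ hβ₁]
    ring

noncomputable def mixedWeights.prob (c δ μ : ℝ) (r : ℕ → Fin m → ℝ) (t : ℕ) (j : Fin m) : ℝ :=
  mixedWeights c δ μ r t j / ∑ k, mixedWeights c δ μ r t k

noncomputable def mixedWeights.gain (c δ μ : ℝ) (r : ℕ → Fin m → ℝ) (t : ℕ) : ℝ :=
  ∑ j, r t j * mixedWeights.prob c δ μ r t j

lemma mixedWeights.prob_nonneg (hc : 0 < c) (hμ₀ : 0 ≤ μ) (hμ₁ : μ < 1) (t : ℕ) (j : Fin m) :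
    0 ≤ mixedWeights.prob c δ μ r t j :=
  div_nonneg (mixedWeights_pos hc hμ₀ hμ₁ t j).le
    (sum_nonneg fun k _ => (mixedWeights_pos hc hμ₀ hμ₁ t k).le)

lemma mixedWeights.sum_prob [NeZero m] (hc : 0 < c) (hμ₀ : 0 ≤ μ) (hμ₁ : μ < 1) (t : ℕ) :
    ∑ j, mixedWeights.prob c δ μ r t j = 1 := by
  simp only [mixedWeights.prob]
  rw [← sum_div]
  exact div_self (sum_pos (fun k _ => mixedWeights_pos hc hμ₀ hμ₁ t k) univ_nonempty).ne'

lemma mixedWeights.prob_le_one [NeZero m] (hc : 0 < c) (hμ₀ : 0 ≤ μ) (hμ₁ : μ < 1) (t : ℕ)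
    (j : Fin m) : mixedWeights.prob c δ μ r t j ≤ 1 :=
  mixedWeights.sum_prob (r := r) (δ := δ) hc hμ₀ hμ₁ t ▸
    single_le_sum (fun k _ => mixedWeights.prob_nonneg hc hμ₀ hμ₁ t k) (mem_univ j)

lemma mixedWeights.gain_nonneg (hc : 0 < c) (hμ₀ : 0 ≤ μ) (hμ₁ : μ < 1)
    (hr : ∀ t j, 0 ≤ r t j ∧ r t j ≤ 1) (t : ℕ) : 0 ≤ mixedWeights.gain c δ μ r t :=
  sum_nonneg fun j _ => mul_nonneg (hr t j).1 (mixedWeights.prob_nonneg hc hμ₀ hμ₁ t j)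

lemma mixedWeights.gain_le_one [NeZero m] (hc : 0 < c) (hμ₀ : 0 ≤ μ) (hμ₁ : μ < 1)
    (hr : ∀ t j, 0 ≤ r t j ∧ r t j ≤ 1) (t : ℕ) : mixedWeights.gain c δ μ r t ≤ 1 :=
  (sum_le_sum fun j _ => mul_le_of_le_one_left (mixedWeights.prob_nonneg hc hμ₀ hμ₁ t j)
    (hr t j).2).trans_eq (mixedWeights.sum_prob hc hμ₀ hμ₁ t)

lemma sum_mixedWeights_succ_le [NeZero m] (hc : 0 < c) (hδ : 0 ≤ δ) (hμ₀ : 0 ≤ μ) (hμ₁ : μ < 1)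
    (hr : ∀ t j, 0 ≤ r t j ∧ r t j ≤ 1) (t : ℕ) :
    ∑ k, mixedWeights c δ μ r (t + 1) k ≤
      c * exp ((exp δ - 1) * (mixedWeights.gain c δ μ r t + μ)) *
        ∑ k, mixedWeights c δ μ r t k := by
  set w := mixedWeights c δ μ r t
  set S := ∑ k, w k
  have hw : ∀ j, 0 < w j := mixedWeights_pos hc hμ₀ hμ₁ t
  have hmix : ∀ j, 0 ≤ (1 - μ) * w j + μ / m * S := fun j =>
    add_nonneg (mul_nonneg (by linarith) (hw j).le)
      (mul_nonneg (by positivity) (sum_nonneg fun k _ => (hw k).le))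
  have hexpδ : 0 ≤ exp δ - 1 := by linarith [one_le_exp hδ]
  calc ∑ j, c * exp (δ * r t j) * ((1 - μ) * w j + μ / m * S)
      ≤ ∑ j, c * (1 + (exp δ - 1) * r t j) * ((1 - μ) * w j + μ / m * S) := by
        gcongr with j
        · exact hmix j
        · exact exp_mul_le_one_add_mul (hr t j).1 (hr t j).2
    _ = c * (∑ j, ((1 - μ) * w j + μ / m * S) +
          (exp δ - 1) * ∑ j, r t j * ((1 - μ) * w j + μ / m * S)) := by
        simp only [mul_sum, ← sum_add_distrib]
        exact sum_congr rfl fun j _ => by ring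
    _ ≤ c * (S + (exp δ - 1) * ((mixedWeights.gain c δ μ r t + μ) * S)) := by
        rw [sum_mix_eq]
        gcongr
        exact sum_mul_mix_le hμ₀ hw (hr t)
    _ ≤ c * exp ((exp δ - 1) * (mixedWeights.gain c δ μ r t + μ)) * S := by
        have := add_one_le_exp ((exp δ - 1) * (mixedWeights.gain c δ μ r t + μ))
        have hS : 0 ≤ S := sum_nonneg fun k _ => (hw k).le
        nlinarith [mul_le_mul_of_nonneg_left this (mul_nonneg hc.le hS)]

lemma sum_mixedWeights_le [NeZero m] (hc : 0 < c) (hδ : 0 ≤ δ) (hμ₀ : 0 ≤ μ) (hμ₁ : μ < 1)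
    (hr : ∀ t j, 0 ≤ r t j ∧ r t j ≤ 1) (T : ℕ) :
    ∑ k, mixedWeights c δ μ r T k ≤
      m * c ^ T * exp ((exp δ - 1) * ∑ t ∈ range T, (mixedWeights.gain c δ μ r t + μ)) := by
  induction T with
  | zero => simp [mixedWeights]
  | succ T ih =>
    calc ∑ k, mixedWeights c δ μ r (T + 1) k
        ≤ c * exp ((exp δ - 1) * (mixedWeights.gain c δ μ r T + μ)) *
            ∑ k, mixedWeights c δ μ r T k := sum_mixedWeights_succ_le hc hδ hμ₀ hμ₁ hr T
      _ ≤ c * exp ((exp δ - 1) * (mixedWeights.gain c δ μ r T + μ)) *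
            (m * c ^ T * exp ((exp δ - 1) *
              ∑ t ∈ range T, (mixedWeights.gain c δ μ r t + μ))) := by gcongr
      _ = _ := by
          rw [sum_range_succ, pow_succ, mul_add (exp δ - 1) (∑ t ∈ range T, _), exp_add]
          ring

lemma pow_mul_exp_le_mixedWeights (hc : 0 < c) (hμ₀ : 0 ≤ μ) (hμ₁ : μ < 1) (T : ℕ)
    (i : Fin m) :
    (c * (1 - μ)) ^ T * exp (δ * ∑ t ∈ range T, r t i) ≤ mixedWeights c δ μ r T i := by
  induction T with
  | zero => simp [mixedWeights]
  | succ T ih =>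
    have hspread : 0 ≤ μ / m * ∑ k, mixedWeights c δ μ r T k :=
      mul_nonneg (by positivity) (sum_nonneg fun k _ => (mixedWeights_pos hc hμ₀ hμ₁ T k).le)
    calc (c * (1 - μ)) ^ (T + 1) * exp (δ * ∑ t ∈ range (T + 1), r t i)
        = c * exp (δ * r T i) *
            ((1 - μ) * ((c * (1 - μ)) ^ T * exp (δ * ∑ t ∈ range T, r t i))) := by
          rw [sum_range_succ, mul_add, exp_add, pow_succ]; ring
      _ ≤ c * exp (δ * r T i) * ((1 - μ) * mixedWeights c δ μ r T i) := by
          gcongr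
      _ ≤ mixedWeights c δ μ r (T + 1) i := by
          simp only [mixedWeights]
          gcongr
          linarith

lemma mixedWeights_log_bound [NeZero m] (hc : 0 < c) (hδ : 0 ≤ δ) (hμ₀ : 0 ≤ μ) (hμ₁ : μ < 1)
    (hr : ∀ t j, 0 ≤ r t j ∧ r t j ≤ 1) (T : ℕ) (i : Fin m) :
    δ * ∑ t ∈ range T, r t i + T * log (1 - μ) ≤
      log m + (exp δ - 1) * ∑ t ∈ range T, (mixedWeights.gain c δ μ r t + μ) := by
  set G := (exp δ - 1) * ∑ t ∈ range T, (mixedWeights.gain c δ μ r t + μ)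
  have hm : (0 : ℝ) < m := by exact_mod_cast Nat.pos_of_ne_zero (NeZero.ne m)
  have h1μ : 0 < 1 - μ := by linarith
  have hle : c ^ T * ((1 - μ) ^ T * exp (δ * ∑ t ∈ range T, r t i)) ≤
      c ^ T * (m * exp G) := by
    calc c ^ T * ((1 - μ) ^ T * exp (δ * ∑ t ∈ range T, r t i))
        = (c * (1 - μ)) ^ T * exp (δ * ∑ t ∈ range T, r t i) := by rw [mul_pow]; ring
      _ ≤ mixedWeights c δ μ r T i := pow_mul_exp_le_mixedWeights hc hμ₀ hμ₁ T i
      _ ≤ ∑ k, mixedWeights c δ μ r T k :=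
          single_le_sum (fun k _ => (mixedWeights_pos hc hμ₀ hμ₁ T k).le) (mem_univ i)
      _ ≤ m * c ^ T * exp G := sum_mixedWeights_le hc hδ hμ₀ hμ₁ hr T
      _ = c ^ T * (m * exp G) := by ring
  have hlog := log_le_log (by positivity) (le_of_mul_le_mul_left hle (pow_pos hc T))
  rwa [log_mul (by positivity) (exp_pos _).ne', log_mul hm.ne' (exp_pos _).ne', log_pow,
    log_exp, log_exp, add_comm] at hlog

lemma mixedWeights_regret_le [NeZero m] (hc : 0 < c) (hδ₀ : 0 < δ) (hδ₁ : δ ≤ 1) (hμ₀ : 0 ≤ μ)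
    (hμ : 6 * μ ≤ δ ^ 2) (hr : ∀ t j, 0 ≤ r t j ∧ r t j ≤ 1) (T : ℕ) (i : Fin m) :
    ∑ t ∈ range T, r t i - ∑ t ∈ range T, mixedWeights.gain c δ μ r t ≤
      log m / δ + 2 * δ * T := by
  set G := ∑ t ∈ range T, mixedWeights.gain c δ μ r t
  have hμ₁ : μ ≤ 1 / 6 := by nlinarith
  have hG₀ : 0 ≤ G := sum_nonneg fun t _ => mixedWeights.gain_nonneg hc hμ₀ (by linarith) hr t
  have hGT : G ≤ T := by
    simpa using sum_le_sum fun t (_ : t ∈ range T) =>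
      mixedWeights.gain_le_one (δ := δ) hc hμ₀ (by linarith) hr t
  have hlog := mixedWeights_log_bound hc hδ₀.le hμ₀ (by linarith) hr T i
  rw [sum_add_distrib, sum_const, card_range, nsmul_eq_mul] at hlog
  have hT : (0 : ℝ) ≤ T := T.cast_nonneg
  have hexp : (exp δ - 1) * (G + T * μ) ≤ (δ + δ ^ 2) * (G + T * μ) :=
    mul_le_mul_of_nonneg_right (exp_sub_one_le_add_sq (abs_le.2 ⟨by linarith, hδ₁⟩))
      (by positivity)
  have hlog₁ : -(2 * μ) * T ≤ T * log (1 - μ) := by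
    rw [mul_comm]
    exact mul_le_mul_of_nonneg_left (neg_two_mul_le_log_one_sub hμ₀ (by linarith)) hT
  rw [div_add' _ _ _ hδ₀.ne', le_div_iff₀ hδ₀]
  nlinarith [mul_le_mul_of_nonneg_left hGT (sq_nonneg δ), mul_le_mul_of_nonneg_right hμ hT,
    mul_nonneg (mul_nonneg hT hμ₀) (by nlinarith : 0 ≤ 2 - δ - δ ^ 2)]

end MixedWeights

lemma sum_mul_le_of_forall_ne_le {ι : Type*} [Fintype ι] {η q : ι → ℝ} {i₀ i₁ : ι}
    (hη : ∀ j ≠ i₀, η j ≤ η i₁) (hq₀ : ∀ j, 0 ≤ q j) (hq₁ : ∑ j, q j = 1) :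
    ∑ j, η j * q j ≤ η i₀ * q i₀ + η i₁ * (1 - q i₀) := by
  classical
  rw [← add_sum_erase _ _ (mem_univ i₀), ← hq₁, ← add_sum_erase _ _ (mem_univ i₀),
    add_sub_cancel_left, mul_sum]
  exact (add_le_add_iff_left _).2 (sum_le_sum fun j hj =>
    mul_le_mul_of_nonneg_right (hη j (ne_of_mem_erase hj)) (hq₀ j))

lemma le_average_of_regret_le {ι : Type*} [Fintype ι] {η : ι → ℝ} {i₀ i₁ : ι}
    (hη : ∀ j ≠ i₀, η j ≤ η i₁) (hgap : η i₁ < η i₀) {q : ℕ → ι → ℝ}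
    (hq₀ : ∀ t j, 0 ≤ q t j) (hq₁ : ∀ t, ∑ j, q t j = 1) {T : ℕ} (hT : 0 < T) {B : ℝ}
    (hregret : T * η i₀ - ∑ t ∈ range T, ∑ j, η j * q t j ≤ B * T) :
    1 - B / (η i₀ - η i₁) ≤ 1 / T * ∑ t ∈ range T, q t i₀ := by
  have hT' : (0 : ℝ) < T := by exact_mod_cast hT
  have hg : 0 < η i₀ - η i₁ := sub_pos.2 hgap
  have hsum : ∑ t ∈ range T, ∑ j, η j * q t j ≤
      ∑ t ∈ range T, (η i₀ * q t i₀ + η i₁ * (1 - q t i₀)) :=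
    sum_le_sum fun t _ => sum_mul_le_of_forall_ne_le hη (hq₀ t) (hq₁ t)
  simp only [sum_add_distrib, ← mul_sum, sum_sub_distrib, sum_const, card_range,
    nsmul_eq_mul, mul_one] at hsum
  set x := ∑ t ∈ range T, q t i₀
  have hkey : (T - x) * (η i₀ - η i₁) ≤ B * T := by linarith
  calc 1 - B / (η i₀ - η i₁) ≤ 1 - (T - x) / T :=
        sub_le_sub_left (by rwa [div_le_div_iff₀ hT' hg]) 1
    _ = 1 / T * x := by field_simp; ring

section History

variable {Ω ι β : Type*} [MeasurableSpace β]

abbrev pastSigma (X : ℕ × ι → Ω → β) (t : ℕ) : MeasurableSpace Ω :=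
  ⨆ p ∈ {q : ℕ × ι | q.1 ≤ t}, MeasurableSpace.comap (X p) inferInstance

lemma pastSigma_mono (X : ℕ × ι → Ω → β) : Monotone (pastSigma X) :=
  fun _ _ hst => biSup_mono fun _ hp => le_trans hp hst

lemma measurable_pastSigma {X : ℕ × ι → Ω → β} {p : ℕ × ι} {t : ℕ} (hp : p.1 ≤ t) :
    Measurable[pastSigma X t] (X p) :=
  measurable_iff_comap_le.2 <| le_biSup (fun q => MeasurableSpace.comap (X q) inferInstance)
    (show p ∈ {q : ℕ × ι | q.1 ≤ t} from hp)

lemma pastSigma_le [MeasurableSpace Ω] {X : ℕ × ι → Ω → β} (hX : ∀ p, Measurable (X p))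
    (t : ℕ) : pastSigma X t ≤ ‹MeasurableSpace Ω› :=
  iSup₂_le fun p _ => (hX p).comap_le

lemma indepFun_of_measurable_pastSigma [MeasurableSpace Ω] {γ : Type*} [MeasurableSpace γ]
    {μ : Measure Ω} {X : ℕ × ι → Ω → β} (hX : ∀ p, Measurable (X p)) (hindep : iIndepFun X μ)
    {t : ℕ} {Y : Ω → γ} (hY : Measurable[pastSigma X t] Y) (i : ι) : IndepFun (X (t + 1, i)) Y μ := by
  have h := indep_biSup_compl (fun p => (hX p).comap_le)
    ((iIndepFun_iff_iIndep _ _ _).1 hindep) {q : ℕ × ι | q.1 ≤ t}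
  rw [IndepFun_iff_Indep]
  refine (indep_of_indep_of_le_left (indep_of_indep_of_le_right h ?_)
    (measurable_iff_comap_le.1 hY)).symm
  exact le_biSup (fun q => MeasurableSpace.comap (X q) inferInstance)
    (show (t + 1, i) ∈ {q : ℕ × ι | q.1 ≤ t}ᶜ by simp)

end History

lemma measurable_mixedWeights {Ω : Type*} {m : ℕ} {c δ μ : ℝ} {ℱ : ℕ → MeasurableSpace Ω}
    (hℱ : Monotone ℱ) {r : Ω → ℕ → Fin m → ℝ}
    (hr : ∀ t j, Measurable[ℱ (t + 1)] fun ω => r ω t j) (t : ℕ) (j : Fin m) :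
    Measurable[ℱ t] fun ω => mixedWeights c δ μ (r ω) t j := by
  induction t generalizing j with
  | zero => exact measurable_const
  | succ t ih =>
    have hW : ∀ k, Measurable[ℱ (t + 1)] fun ω => mixedWeights c δ μ (r ω) t k :=
      fun k => (ih k).mono (hℱ t.le_succ) le_rfl
    exact (((hr t j).const_mul δ).exp.const_mul c).mul
      (((hW j).const_mul _).add ((Finset.measurable_sum _ fun k _ => hW k).const_mul _))

lemma measurable_pastSigma_mixedWeights_prob {Ω : Type*} {m : ℕ} {c δ μ : ℝ}
    {R : ℕ × Fin m → Ω → ℝ} (t : ℕ) (j : Fin m) :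
    Measurable[pastSigma R t] fun ω => mixedWeights.prob c δ μ (fun s k => R (s + 1, k) ω) t j := by
  have hW := measurable_mixedWeights (c := c) (δ := δ) (μ := μ) (pastSigma_mono R)
    (r := fun ω s k => R (s + 1, k) ω) fun s k => measurable_pastSigma (p := (s + 1, k)) le_rfl
  exact (hW t j).div (Finset.measurable_sum _ fun k _ => hW t k)

lemma integral_eq_of_forall_eq_zero_or_one {Ω : Type*} [MeasurableSpace Ω] {μ : Measure Ω}
    {X : Ω → ℝ} (hX : Measurable X) (hX₀₁ : ∀ ω, X ω = 0 ∨ X ω = 1) {a : ℝ} (ha : 0 ≤ a)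
    (hXa : μ {ω | X ω = 1} = ENNReal.ofReal a) : ∫ ω, X ω ∂μ = a := by
  have hind : X = {ω | X ω = 1}.indicator 1 := by
    funext ω
    rcases hX₀₁ ω with h | h <;> simp [Set.indicator, h]
  rw [hind, integral_indicator_one (s := {ω | X ω = 1}) (hX (measurableSet_singleton 1)),
    measureReal_def, hXa, ENNReal.toReal_ofReal ha]

lemma expected_regret_le {Ω ι : Type*} [MeasurableSpace Ω] [Fintype ι] {Pr : Measure Ω}
    [IsProbabilityMeasure Pr] {R : ℕ × ι → Ω → ℝ} {P : ℕ → ι → Ω → ℝ} {η : ι → ℝ}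
    (hRmeas : ∀ p, Measurable (R p)) (hR : ∀ p ω, 0 ≤ R p ω ∧ R p ω ≤ 1)
    (hER : ∀ p, ∫ ω, R p ω ∂Pr = η p.2) (hindep : iIndepFun R Pr)
    (hPmeas : ∀ t j, Measurable[pastSigma R t] (P t j)) (hP : ∀ t j ω, 0 ≤ P t j ω ∧ P t j ω ≤ 1)
    {T : ℕ} {i : ι} {C : ℝ}
    (hpath : ∀ ω, ∑ t ∈ range T, R (t + 1, i) ω -
      ∑ t ∈ range T, ∑ j, R (t + 1, j) ω * P t j ω ≤ C) :
    T * η i - ∑ t ∈ range T, ∑ j, η j * ∫ ω, P t j ω ∂Pr ≤ C := by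
  have hint : ∀ f : Ω → ℝ, Measurable f → (∀ ω, 0 ≤ f ω ∧ f ω ≤ 1) → Integrable f Pr :=
    fun f hf hf₀₁ => .of_bound hf.aestronglyMeasurable 1 <| ae_of_all _ fun ω => by
      rw [Real.norm_of_nonneg (hf₀₁ ω).1]; exact (hf₀₁ ω).2
  have hPm : ∀ t j, Measurable (P t j) := fun t j =>
    (hPmeas t j).mono (pastSigma_le hRmeas t) le_rfl
  have hRint : ∀ p, Integrable (R p) Pr := fun p => hint _ (hRmeas p) (hR p)
  have hRPint : ∀ t j, Integrable (fun ω => R (t + 1, j) ω * P t j ω) Pr := fun t j =>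
    hint _ ((hRmeas _).mul (hPm t j)) fun ω =>
      ⟨mul_nonneg (hR _ ω).1 (hP t j ω).1, mul_le_one₀ (hR _ ω).2 (hP t j ω).1 (hP t j ω).2⟩
  have hRP : ∀ t j, ∫ ω, R (t + 1, j) ω * P t j ω ∂Pr = η j * ∫ ω, P t j ω ∂Pr := fun t j => by
    rw [(indepFun_of_measurable_pastSigma hRmeas hindep (hPmeas t j) j)
      |>.integral_fun_mul_eq_mul_integral (hRmeas _).aestronglyMeasurable
        (hPm t j).aestronglyMeasurable, hER]
  have hRsum : Integrable (fun ω => ∑ t ∈ range T, R (t + 1, i) ω) Pr :=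
    integrable_finsetSum _ fun t _ => hRint _
  have hRPsum : Integrable (fun ω => ∑ t ∈ range T, ∑ j, R (t + 1, j) ω * P t j ω) Pr :=
    integrable_finsetSum _ fun t _ => integrable_finsetSum _ fun j _ => hRPint t j
  calc T * η i - ∑ t ∈ range T, ∑ j, η j * ∫ ω, P t j ω ∂Pr
      = ∫ ω, (∑ t ∈ range T, R (t + 1, i) ω -
          ∑ t ∈ range T, ∑ j, R (t + 1, j) ω * P t j ω) ∂Pr := by
        rw [integral_sub hRsum hRPsum, integral_finsetSum _ fun t _ => hRint _,
          integral_finsetSum _ fun t _ => integrable_finsetSum _ fun j _ => hRPint t j]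
        simp_rw [integral_finsetSum _ fun j _ => hRPint _ j, hRP, hER]
        simp
    _ ≤ ∫ _, C ∂Pr := integral_mono (hRsum.sub hRPsum) (integrable_const C) hpath
    _ = C := by simp

lemma sum_integral_eq_one {Ω ι : Type*} [MeasurableSpace Ω] [Fintype ι] {μ : Measure Ω}
    [IsProbabilityMeasure μ] {P : ι → Ω → ℝ} (hPm : ∀ j, Measurable (P j))
    (hP₀ : ∀ j ω, 0 ≤ P j ω) (hP₁ : ∀ ω, ∑ j, P j ω = 1) : ∑ j, ∫ ω, P j ω ∂μ = 1 := by
  have hint : ∀ j, Integrable (P j) μ := fun j =>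
    .of_bound (hPm j).aestronglyMeasurable 1 <| ae_of_all _ fun ω => by
      rw [Real.norm_of_nonneg (hP₀ j ω), ← hP₁ ω]
      exact single_le_sum (fun k _ => hP₀ k ω) (mem_univ j)
  rw [← integral_finsetSum _ fun j _ => hint j]
  simp [hP₁]

section RandomRewards

variable {Ω : Type*} [MeasurableSpace Ω] {Pr : Measure Ω} [IsProbabilityMeasure Pr] {m : ℕ}
  [NeZero m] {R : ℕ × Fin m → Ω → ℝ} {c δ μ : ℝ}

lemma sum_integral_mixedWeights_prob (hRmeas : ∀ p, Measurable (R p)) (hc : 0 < c)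
    (hμ₀ : 0 ≤ μ) (hμ₁ : μ < 1) (t : ℕ) :
    ∑ j, ∫ ω, mixedWeights.prob c δ μ (fun s k => R (s + 1, k) ω) t j ∂Pr = 1 :=
  sum_integral_eq_one
    (fun j => (measurable_pastSigma_mixedWeights_prob t j).mono (pastSigma_le hRmeas t) le_rfl)
    (fun j _ => mixedWeights.prob_nonneg hc hμ₀ hμ₁ t j) fun _ => mixedWeights.sum_prob hc hμ₀ hμ₁ t

lemma integral_mixedWeights_regret_le {η : Fin m → ℝ} (hRmeas : ∀ p, Measurable (R p))
    (hR : ∀ p ω, 0 ≤ R p ω ∧ R p ω ≤ 1) (hER : ∀ p, ∫ ω, R p ω ∂Pr = η p.2)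
    (hindep : iIndepFun R Pr) (hc : 0 < c) (hδ₀ : 0 < δ) (hδ₁ : δ ≤ 1) (hμ₀ : 0 ≤ μ)
    (hμ : 6 * μ ≤ δ ^ 2) (T : ℕ) (i : Fin m) :
    T * η i - ∑ t ∈ range T, ∑ j,
        η j * ∫ ω, mixedWeights.prob c δ μ (fun s k => R (s + 1, k) ω) t j ∂Pr ≤
      Real.log m / δ + 2 * δ * T := by
  have hμ₁ : μ < 1 := by nlinarith
  exact expected_regret_le hRmeas hR hER hindep measurable_pastSigma_mixedWeights_prob
    (fun t j ω => ⟨mixedWeights.prob_nonneg hc hμ₀ hμ₁ t j,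
      mixedWeights.prob_le_one hc hμ₀ hμ₁ t j⟩)
    fun ω => mixedWeights_regret_le hc hδ₀ hδ₁ hμ₀ hμ (fun t j => hR _ ω) T i

end RandomRewards

theorem infinite_population_best_option
    {Ω : Type*} [MeasurableSpace Ω] (Pr : Measure Ω) [IsProbabilityMeasure Pr]
    (m : ℕ) (hm : 2 ≤ m)
    (η : Fin m → ℝ) (hη0 : ∀ j, 0 ≤ η j)
    (hηdec : ∀ i j : Fin m, i ≤ j → η j ≤ η i)
    (hgap : η ⟨1, by omega⟩ < η ⟨0, by omega⟩)
    (β μ δ : ℝ) (hβ : 1/2 < β) (hβ' : β ≤ Real.exp 1 / (Real.exp 1 + 1))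
    (hδ : δ = Real.log (β / (1 - β))) (hμ0 : 0 ≤ μ) (hμ : 6 * μ ≤ δ ^ 2)
    (R : ℕ × Fin m → Ω → ℝ)
    (hRmeas : ∀ p, Measurable (R p))
    (hRval : ∀ p ω, R p ω = 0 ∨ R p ω = 1)
    (hRbern : ∀ p, Pr {ω | R p ω = 1} = ENNReal.ofReal (η p.2))
    (hindep : iIndepFun R Pr)
    (W : ℕ → Fin m → Ω → ℝ)
    (hW0 : ∀ j ω, W 0 j ω = 1)
    (hupd : ∀ t j ω, W (t + 1) j ω =
      ((1 - μ) * W t j ω + (μ / m) * ∑ k, W t k ω) *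
        Real.rpow β (R (t + 1, j) ω) * Real.rpow (1 - β) (1 - R (t + 1, j) ω))
    (P : ℕ → Fin m → Ω → ℝ)
    (hP : ∀ t j ω, P t j ω = W t j ω / ∑ k, W t k ω)
    (T : ℕ) (hT : Real.log m / δ ^ 2 ≤ T) :
    (1 / T) * ∑ t ∈ Finset.Icc 1 T, ∫ ω, P (t - 1) ⟨0, by omega⟩ ω ∂Pr
      ≥ 1 - 3 * δ / (η ⟨0, by omega⟩ - η ⟨1, by omega⟩) := by
  have : NeZero m := ⟨by omega⟩
  obtain ⟨hδ₀, hδ₁⟩ : 0 < δ ∧ δ ≤ 1 := hδ ▸ log_odds_mem_Ioc hβ hβ'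
  have hβ₁ : β < 1 := lt_one_of_le_div_add_one (Real.exp_pos 1) hβ'
  have hc : 0 < 1 - β := by linarith
  have hμ₁ : μ < 1 := by nlinarith
  have hR : ∀ p ω, 0 ≤ R p ω ∧ R p ω ≤ 1 := fun p ω => by
    rcases hRval p ω with h | h <;> simp [h]
  have hW : ∀ ω, (fun t j => W t j ω) =
      mixedWeights (1 - β) δ μ (fun s k => R (s + 1, k) ω) := fun ω =>
    hδ ▸ eq_mixedWeights (by linarith) hβ₁ (fun j => hW0 j ω) fun t j => hupd t j ω
  have hPW : ∀ t j, P t j = fun ω =>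
      mixedWeights.prob (1 - β) δ μ (fun s k => R (s + 1, k) ω) t j := fun t j => by
    funext ω
    simp only [hP, ← hW ω, mixedWeights.prob]
  have hregret := integral_mixedWeights_regret_le hRmeas hR
    (fun p => integral_eq_of_forall_eq_zero_or_one (hRmeas p) (hRval p) (hη0 p.2) (hRbern p))
    hindep hc hδ₀ hδ₁ hμ0 hμ T ⟨0, by omega⟩
  have hT₀ : 0 < T := by
    exact_mod_cast (div_pos (Real.log_pos (by exact_mod_cast hm)) (by positivity)).trans_le hT
  have hlogT : Real.log m / δ ≤ δ * T := by
    rw [div_le_iff₀ hδ₀]; rw [div_le_iff₀ (by positivity)] at hT; linarith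
  have hη : ∀ j ≠ (⟨0, by omega⟩ : Fin m), η j ≤ η ⟨1, by omega⟩ := fun j hj =>
    hηdec _ _ (Nat.one_le_iff_ne_zero.2 fun h => hj (Fin.ext h))
  rw [sum_Icc_one_sub_one (fun t => ∫ ω, P t ⟨0, by omega⟩ ω ∂Pr), ge_iff_le]
  simp only [hPW]
  exact le_average_of_regret_le hη hgap
    (fun t j => integral_nonneg fun _ => mixedWeights.prob_nonneg hc hμ0 hμ₁ t j)
    (sum_integral_mixedWeights_prob hRmeas hc hμ0 hμ₁) hT₀ (by linarith)
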